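/- Let u ∈ S_n and let η ∈ S_n be an (m+1)-cycle with m ≥ 1 such that u ≤_k u·η in the extended k-Bruhat order. Then there exists a unique unimodal path γ from u to u·η in the extended k-Bruhat order; moreover γ has length m and its number of decreasing steps de(γ) equals ht_k(η) := #{i ≤ k : η(i) ≠ i} − 1. -/

import Mathlib

/-- `IsKPath k u l` : starting from `u`, the list of position pairs `l`
describes a path of `k`-edges in the Bruhat graph of `S_n`. -/
def IsKPath {n : ℕ} (k : ℕ) : Equiv.Perm (Fin n) → List (Fin n × Fin n) → Prop
  | _, [] => True
  | u, p :: l => p.1.val < k ∧ k ≤ p.2.val ∧ u p.1 < u p.2 ∧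
      IsKPath k (u * Equiv.swap p.1 p.2) l

/-- The labels `τ_i = w_{i-1}(a_i)` of the edges of a path. -/
def pathLabels {n : ℕ} : Equiv.Perm (Fin n) → List (Fin n × Fin n) → List (Fin n)
  | _, [] => []
  | u, p :: l => u p.1 :: pathLabels (u * Equiv.swap p.1 p.2) l

/-- The endpoint `u · t_{a₁b₁} ⋯ t_{a_m b_m}` of a path starting at `u`. -/
def pathEnd {n : ℕ} (u : Equiv.Perm (Fin n)) (l : List (Fin n × Fin n)) : Equiv.Perm (Fin n) :=
  u * (l.map fun p => Equiv.swap p.1 p.2).prod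

/-- A `k`-edge in the Bruhat graph of `S_n`. -/
def kEdge {n : ℕ} (k : ℕ) (u w : Equiv.Perm (Fin n)) : Prop :=
  ∃ a b : Fin n, a.val < k ∧ k ≤ b.val ∧ u a < u b ∧ w = u * Equiv.swap a b

/-- The extended `k`-Bruhat order. -/
def extKBruhat {n : ℕ} (k : ℕ) : Equiv.Perm (Fin n) → Equiv.Perm (Fin n) → Prop :=
  Relation.ReflTransGen (kEdge k)

/-- `L` is unimodal via the decomposition `L = L1 ++ L2`: the nonempty `L1`
is strictly increasing up to the peak (its last entry) and from the peak the
labels strictly decrease along `L2`; `L2.length` is `de(γ)`. -/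
def UnimodalWith {n : ℕ} (L L1 L2 : List (Fin n)) : Prop :=
  L = L1 ++ L2 ∧ L1 ≠ [] ∧ List.Chain' (· < ·) L1 ∧
    ∀ x ∈ L1.getLast?, List.Chain (· > ·) x L2

/-- A nonempty list of labels is unimodal: `τ₁ < ⋯ < τ_i > ⋯ > τ_m` for some `i`. -/
def Unimodal {n : ℕ} (L : List (Fin n)) : Prop := ∃ L1 L2, UnimodalWith L L1 L2


/-!
Let `a` be the position in the support of `η` where `u` is smallest and `b = η⁻¹ a`. A `k`-path
from `u` to `u * η` only swaps positions in the support of `η` and has to move `a`; the first step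
moving `a` swaps it with some `b' ≥ k`, after which the value `u a` sits at `b'` for good, so
`b' = b`, and the label `u a` of that step is the strict minimum of all labels. The strict minimum
of a unimodal sequence is at one of its ends, so `(a, b)` is the first or the last step, and the
remaining steps form a unimodal path for the shorter cycle `(a b) * η`, resp. `η * (a b)`. The
cycle criterion `KAdmissible` allows exactly one of the two, according as `u b < u (η a)` or not,
and induction on the length of the cycle gives existence and uniqueness. The new step is
decreasing exactly when it is appended at the end, i.e. when the point removed from the cycle is
`a < k`.
-/

open Equiv Equiv.Perm

section

variable {n k : ℕ}

section Swap

variable {α : Type*} [DecidableEq α] {a b c : α}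

lemma swap_apply_mem {S : Finset α} (ha : a ∈ S) (hb : b ∈ S) (hc : c ∈ S) :
    swap a b c ∈ S := by
  rw [swap_apply_def]
  split_ifs <;> assumption

variable [Preorder α] {u : Perm α}

lemma apply_le_mul_swap_apply (hab : u a < u b) (hcb : c ≠ b) : u c ≤ (u * swap a b) c := by
  rcases eq_or_ne c a with rfl | hca
  · simpa using hab.le
  · rw [mul_apply, swap_apply_of_ne_of_ne hca hcb]

lemma mul_swap_apply_le_apply (hab : u a < u b) (hca : c ≠ a) : (u * swap a b) c ≤ u c := by
  rcases eq_or_ne c b with rfl | hcb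
  · simpa using hab.le
  · rw [mul_apply, swap_apply_of_ne_of_ne hca hcb]

lemma min_le_mul_swap_apply {S : Finset α} (hmin : ∀ d ∈ S, u c ≤ u d) (ha : a ∈ S)
    (hb : b ∈ S) :
    ∀ d ∈ S, u c ≤ (u * swap a b) d :=
  fun _ hd => hmin _ (swap_apply_mem ha hb hd)

end Swap

section Paths

variable {u v : Perm (Fin n)} {l : List (Fin n × Fin n)}

@[simp] lemma pathEnd_nil (u : Perm (Fin n)) : pathEnd u [] = u := mul_one u

@[simp] lemma pathEnd_cons (u : Perm (Fin n)) (p : Fin n × Fin n) (l : List (Fin n × Fin n)) :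
    pathEnd u (p :: l) = pathEnd (u * swap p.1 p.2) l := by
  simp [pathEnd, mul_assoc]

lemma pathEnd_append (u : Perm (Fin n)) (l₁ l₂ : List (Fin n × Fin n)) :
    pathEnd u (l₁ ++ l₂) = pathEnd (pathEnd u l₁) l₂ := by
  simp [pathEnd, mul_assoc]

@[simp] lemma pathLabels_nil (u : Perm (Fin n)) : pathLabels u [] = [] := rfl

@[simp] lemma pathLabels_cons (u : Perm (Fin n)) (p : Fin n × Fin n) (l : List (Fin n × Fin n)) :
    pathLabels u (p :: l) = u p.1 :: pathLabels (u * swap p.1 p.2) l := rfl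

lemma pathLabels_append (u : Perm (Fin n)) (l₁ l₂ : List (Fin n × Fin n)) :
    pathLabels u (l₁ ++ l₂) = pathLabels u l₁ ++ pathLabels (pathEnd u l₁) l₂ := by
  induction l₁ generalizing u with
  | nil => simp
  | cons p l ih => simp [ih]

@[simp] lemma length_pathLabels (u : Perm (Fin n)) (l : List (Fin n × Fin n)) :
    (pathLabels u l).length = l.length := by
  induction l generalizing u with
  | nil => rfl
  | cons p l ih => simp [ih]

@[simp] lemma pathLabels_eq_nil_iff : pathLabels u l = [] ↔ l = [] := by
  rw [← List.length_eq_zero_iff, length_pathLabels, List.length_eq_zero_iff]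

lemma isKPath_cons {p : Fin n × Fin n} :
    IsKPath k u (p :: l) ↔ p.1.val < k ∧ k ≤ p.2.val ∧ u p.1 < u p.2 ∧
      IsKPath k (u * swap p.1 p.2) l := Iff.rfl

lemma isKPath_append {l₁ l₂ : List (Fin n × Fin n)} :
    IsKPath k u (l₁ ++ l₂) ↔ IsKPath k u l₁ ∧ IsKPath k (pathEnd u l₁) l₂ := by
  induction l₁ generalizing u with
  | nil => simp [IsKPath]
  | cons p l ih => simp [isKPath_cons, ih, and_assoc]

lemma isKPath_singleton {a b : Fin n} :
    IsKPath k u [(a, b)] ↔ a.val < k ∧ k ≤ b.val ∧ u a < u b := by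
  simp [IsKPath]

lemma extKBruhat.exists_isKPath (h : extKBruhat k u v) :
    ∃ l, IsKPath k u l ∧ pathEnd u l = v := by
  induction h with
  | refl => exact ⟨[], trivial, pathEnd_nil u⟩
  | tail _ hedge ih =>
    obtain ⟨l, hl, rfl⟩ := ih
    obtain ⟨a, b, ha, hb, hab, rfl⟩ := hedge
    exact ⟨l ++ [(a, b)], isKPath_append.2 ⟨hl, isKPath_singleton.2 ⟨ha, hb, hab⟩⟩,
      by simp [pathEnd_append]⟩

lemma IsKPath.mem (h : IsKPath k u l) {q : Fin n × Fin n} (hq : q ∈ l) :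
    q.1.val < k ∧ k ≤ q.2.val := by
  induction l generalizing u with
  | nil => simp at hq
  | cons p l ih =>
    obtain ⟨h1, h2, -, h⟩ := h
    rcases List.mem_cons.1 hq with rfl | hq
    exacts [⟨h1, h2⟩, ih h hq]

lemma IsKPath.apply_le_pathEnd (h : IsKPath k u l) {c : Fin n} (hc : c.val < k) :
    u c ≤ pathEnd u l c := by
  induction l generalizing u with
  | nil => simp
  | cons p l ih =>
    obtain ⟨-, h2, hlt, h⟩ := h
    exact (apply_le_mul_swap_apply hlt (by rintro rfl; omega)).trans (ih h)

lemma IsKPath.pathEnd_le_apply (h : IsKPath k u l) {c : Fin n} (hc : k ≤ c.val) :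
    pathEnd u l c ≤ u c := by
  induction l generalizing u with
  | nil => simp
  | cons p l ih =>
    obtain ⟨h1, -, hlt, h⟩ := h
    exact (ih h).trans (mul_swap_apply_le_apply hlt (by rintro rfl; omega))

lemma IsKPath.apply_fst_lt_pathEnd (h : IsKPath k u l) {q : Fin n × Fin n} (hq : q ∈ l) :
    u q.1 < pathEnd u l q.1 := by
  induction l generalizing u with
  | nil => simp at hq
  | cons p l ih =>
    obtain ⟨h1, h2, hlt, h⟩ := h
    rw [pathEnd_cons]
    rcases List.mem_cons.1 hq with rfl | hq
    · exact hlt.trans_le (by simpa using h.apply_le_pathEnd h1)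
    · have hqk := (h.mem hq).1
      exact (apply_le_mul_swap_apply hlt (by rintro hq2; rw [hq2] at hqk; omega)).trans_lt (ih h hq)

lemma IsKPath.pathEnd_lt_apply_snd (h : IsKPath k u l) {q : Fin n × Fin n} (hq : q ∈ l) :
    pathEnd u l q.2 < u q.2 := by
  induction l generalizing u with
  | nil => simp at hq
  | cons p l ih =>
    obtain ⟨h1, h2, hlt, h⟩ := h
    rw [pathEnd_cons]
    rcases List.mem_cons.1 hq with rfl | hq
    · exact (by simpa using h.pathEnd_le_apply h2 : _ ≤ u q.1).trans_lt hlt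
    · have hqk := (h.mem hq).2
      exact (ih h hq).trans_le (mul_swap_apply_le_apply hlt (by rintro hq1; rw [hq1] at hqk; omega))

lemma IsKPath.forall_mem_of_support_subset {ζ : Perm (Fin n)} {S : Finset (Fin n)}
    (h : IsKPath k u l) (hend : pathEnd u l = u * ζ) (hS : ζ.support ⊆ S) :
    ∀ q ∈ l, q.1 ∈ S ∧ q.2 ∈ S := by
  refine fun q hq =>
    ⟨hS (Perm.mem_support.2 fun hfix => ?_), hS (Perm.mem_support.2 fun hfix => ?_)⟩
  · exact (h.apply_fst_lt_pathEnd hq).ne' (by rw [hend, mul_apply, hfix])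
  · exact (h.pathEnd_lt_apply_snd hq).ne (by rw [hend, mul_apply, hfix])

lemma IsKPath.eq_nil_of_pathEnd_eq_self (h : IsKPath k u l) (hend : pathEnd u l = u) : l = [] :=
  List.eq_nil_iff_forall_not_mem.2 fun q hq => by
    simpa using (h.forall_mem_of_support_subset (ζ := 1) (by rw [hend, mul_one]) subset_rfl q hq).1

end Paths

/-- The criterion for `u ≤_k u * η` when `η` is a cycle. -/
def KAdmissible (k : ℕ) (u η : Perm (Fin n)) : Prop :=
  ∀ c : Fin n, η c ≠ c → (c.val < k → u c < u (η c)) ∧ (k ≤ c.val → u (η c) < u c)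

lemma IsKPath.kAdmissible {u η : Perm (Fin n)} {l : List (Fin n × Fin n)} (h : IsKPath k u l)
    (hend : pathEnd u l = u * η) : KAdmissible k u η := by
  intro c hc
  have hne : u (η c) ≠ u c := u.injective.ne hc
  have hc_end : pathEnd u l c = u (η c) := by rw [hend, mul_apply]
  exact ⟨fun hk => (hc_end ▸ h.apply_le_pathEnd hk).lt_of_ne hne.symm,
    fun hk => (hc_end ▸ h.pathEnd_le_apply hk).lt_of_ne hne⟩

section Unimodal

variable {L L1 L2 : List (Fin n)} {x : Fin n}

lemma UnimodalWith.cons_of_lt (h : UnimodalWith L L1 L2) (hx : ∀ y ∈ L, x < y) :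
    UnimodalWith (x :: L) (x :: L1) L2 := by
  obtain ⟨rfl, hne, hinc, hdec⟩ := h
  obtain ⟨a, t, rfl⟩ := List.exists_cons_of_ne_nil hne
  exact ⟨rfl, List.cons_ne_nil _ _, List.isChain_cons_cons.2 ⟨hx a (by simp), hinc⟩,
    by simpa [List.getLast?_cons_cons] using hdec⟩

lemma UnimodalWith.append_singleton_of_lt (h : UnimodalWith L L1 L2) (hx : ∀ y ∈ L, x < y) :
    UnimodalWith (L ++ [x]) L1 (L2 ++ [x]) := by
  obtain ⟨rfl, hne, hinc, hdec⟩ := h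
  refine ⟨by simp, hne, hinc, fun z hz => ?_⟩
  have hzL : ∀ y ∈ z :: L2, y ∈ L1 ++ L2 := fun y hy => by
    rcases List.mem_cons.1 hy with rfl | hy
    exacts [List.mem_append_left _ (List.mem_of_mem_getLast? hz), List.mem_append_right _ hy]
  refine List.isChain_append.2 ⟨hdec z hz, List.IsChain.singleton x, fun y hy y' hy' => ?_⟩
  simp only [List.head?_cons, Option.mem_def, Option.some.injEq] at hy'
  exact hy' ▸ hx y (hzL y (List.mem_of_mem_getLast? hy))

lemma UnimodalWith.length_eq {M1 M2 : List (Fin n)} (h : UnimodalWith L L1 L2)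
    (h' : UnimodalWith L M1 M2) : L2.length = M2.length := by
  -- the peak is the last entry of the increasing part, so it cannot be moved to the right
  have key : ∀ {A1 A2 B2 c : List (Fin n)}, UnimodalWith L A1 A2 →
      UnimodalWith L (A1 ++ c) B2 → A2 = c ++ B2 → c = [] := by
    rintro A1 A2 B2 (_ | ⟨y, c⟩) ⟨-, hne, -, hdec⟩ ⟨-, -, hinc, -⟩ rfl
    · rfl
    obtain ⟨z, hz⟩ := Option.isSome_iff_exists.1 (List.getLast?_isSome.2 hne)
    have hzy : z < y := (List.isChain_append.1 hinc).2.2 z hz y rfl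
    exact absurd (List.isChain_cons_cons.1 (hdec z hz)).1 hzy.not_gt
  obtain ⟨hL, -⟩ := id h
  obtain ⟨hL', -⟩ := id h'
  rcases List.append_eq_append_iff.1 (hL.symm.trans hL') with ⟨c, rfl, rfl⟩ | ⟨c, rfl, rfl⟩
  · simp [key h h' rfl]
  · simp [key h' h rfl]

lemma Unimodal.of_cons (h : Unimodal (x :: L)) (hL : L ≠ []) : Unimodal L := by
  obtain ⟨_ | ⟨a, t⟩, L2, hL', hne, hinc, hdec⟩ := h
  · exact absurd rfl hne
  simp only [List.cons_append, List.cons.injEq] at hL'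
  obtain ⟨rfl, rfl⟩ := hL'
  rcases t with _ | ⟨b, t⟩
  · obtain ⟨c, L2, rfl⟩ := List.exists_cons_of_ne_nil hL
    exact ⟨[c], L2, rfl, List.cons_ne_nil _ _, List.IsChain.singleton c,
      fun y hy => by
        obtain rfl : c = y := by simpa using hy
        exact (List.isChain_cons_cons.1 (hdec x rfl)).2⟩
  · exact ⟨b :: t, L2, rfl, List.cons_ne_nil _ _, (List.isChain_cons_cons.1 hinc).2,
      by simpa [List.getLast?_cons_cons] using hdec⟩

lemma Unimodal.of_append_singleton (h : Unimodal (L ++ [x])) (hL : L ≠ []) : Unimodal L := by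
  obtain ⟨L1, L2, hL', hne, hinc, hdec⟩ := h
  rcases L2.eq_nil_or_concat' with rfl | ⟨L2, y, rfl⟩
  · rw [List.append_nil] at hL'
    subst hL'
    exact ⟨L, [], by simp, hL, (List.isChain_append.1 hinc).1,
      fun _ _ => List.IsChain.singleton _⟩
  · rw [← List.append_assoc] at hL'
    obtain ⟨rfl, -⟩ := List.append_inj' hL' rfl
    exact ⟨L1, L2, rfl, hne, hinc, fun z hz =>
      (List.isChain_append (l₁ := z :: L2)).1 (hdec z hz) |>.1⟩

/-- The increasing part starts with its minimum and the decreasing part ends with its minimum. -/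
lemma Unimodal.head?_eq_or_getLast?_eq_of_min {m : Fin n} (h : Unimodal L) (hm : m ∈ L)
    (hmin : ∀ y ∈ L, m ≤ y) : L.head? = some m ∨ L.getLast? = some m := by
  obtain ⟨L1, L2, rfl, hne, hinc, hdec⟩ := h
  obtain ⟨a, t, rfl⟩ := List.exists_cons_of_ne_nil hne
  rcases List.mem_append.1 hm with hm | hm
  · left
    rcases List.mem_cons.1 hm with rfl | hm
    · rfl
    · have ham := (List.pairwise_cons.1 (List.isChain_iff_pairwise.1 hinc)).1 m hm
      exact absurd (hmin a (by simp)) ham.not_ge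
  · right
    obtain ⟨z, hz⟩ := Option.isSome_iff_exists.1 (List.getLast?_isSome.2 hne)
    rcases L2.eq_nil_or_concat' with rfl | ⟨L2, e, rfl⟩
    · simp at hm
    have hdec' := (List.pairwise_cons.1 (List.isChain_iff_pairwise.1 (hdec z hz))).2
    rcases List.mem_append.1 hm with hm | hm
    · have hem := (List.pairwise_append.1 hdec').2.2 m hm e (by simp)
      exact absurd (hmin e (by simp)) hem.not_ge
    · obtain rfl : m = e := by simpa using hm
      simp [List.getLast?_cons, List.getLast?_append]

lemma Unimodal.eq_nil_or_eq_nil_of_lt {X Y : List (Fin n)} {m : Fin n} (h : Unimodal (X ++ m :: Y))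
    (hX : ∀ x ∈ X, m < x) (hY : ∀ y ∈ Y, m < y) : X = [] ∨ Y = [] := by
  have hmin : ∀ y ∈ X ++ m :: Y, m ≤ y := by
    intro y hy
    rcases List.mem_append.1 hy with hy | hy
    · exact (hX y hy).le
    rcases List.mem_cons.1 hy with rfl | hy
    exacts [le_rfl, (hY y hy).le]
  rcases h.head?_eq_or_getLast?_eq_of_min (by simp) hmin with hm | hm
  · left
    rcases X with _ | ⟨x, X⟩
    · rfl
    · exact absurd (by simpa using hm) (hX x (by simp)).ne'
  · right
    rcases Y.eq_nil_or_concat' with rfl | ⟨Y, y, rfl⟩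
    · rfl
    · exact absurd (by simpa [List.getLast?_append, List.getLast?_cons] using hm)
        (hY y (by simp)).ne'

end Unimodal

section Minimum

variable {v : Perm (Fin n)} {l : List (Fin n × Fin n)} {S : Finset (Fin n)} {c : Fin n}

lemma IsKPath.pathEnd_apply_eq_and_lt_of_min (h : IsKPath k v l)
    (hS : ∀ q ∈ l, q.1 ∈ S ∧ q.2 ∈ S) (hmin : ∀ d ∈ S, v c ≤ v d)
    (hc : ∀ q ∈ l, q.1 ≠ c) :
    pathEnd v l c = v c ∧ ∀ x ∈ pathLabels v l, v c < x := by
  induction l generalizing v with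
  | nil => simp
  | cons p l ih =>
    obtain ⟨-, -, hlt, h⟩ := h
    have hp := hS p (by simp)
    have hpc : p.1 ≠ c := hc p (by simp)
    have hp2c : p.2 ≠ c := by rintro rfl; exact (hmin p.1 hp.1).not_gt hlt
    have hvc : (v * swap p.1 p.2) c = v c := by
      rw [mul_apply, swap_apply_of_ne_of_ne hpc.symm hp2c.symm]
    obtain ⟨hend, hlab⟩ := ih h (fun q hq => hS q (List.mem_cons_of_mem _ hq))
      (hvc ▸ min_le_mul_swap_apply hmin hp.1 hp.2) (fun q hq => hc q (List.mem_cons_of_mem _ hq))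
    refine ⟨by rw [pathEnd_cons, hend, hvc], ?_⟩
    simp only [pathLabels_cons, List.mem_cons, forall_eq_or_imp]
    exact ⟨(hmin p.1 hp.1).lt_of_ne (v.injective.ne hpc.symm), hvc ▸ hlab⟩

lemma IsKPath.exists_split_of_min (h : IsKPath k v l) (hS : ∀ q ∈ l, q.1 ∈ S ∧ q.2 ∈ S)
    (hmin : ∀ d ∈ S, v c ≤ v d) (hmove : pathEnd v l c ≠ v c) :
    ∃ lA b lB X Y, l = lA ++ (c, b) :: lB ∧ pathEnd v l b = v c ∧
      pathLabels v l = X ++ v c :: Y ∧ X.length = lA.length ∧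
      (∀ x ∈ X, v c < x) ∧ ∀ y ∈ Y, v c < y := by
  induction l generalizing v with
  | nil => simp at hmove
  | cons p l ih =>
    obtain ⟨a, b⟩ := p
    obtain ⟨-, hbk, hlt, h⟩ := h
    have hp := hS (a, b) (by simp)
    have hS' : ∀ q ∈ l, q.1 ∈ S ∧ q.2 ∈ S := fun q hq => hS q (List.mem_cons_of_mem _ hq)
    have hmin' := min_le_mul_swap_apply hmin hp.1 hp.2
    by_cases hac : a = c
    · -- the value `v c` moves to `b ≥ k`, which is never a first coordinate, so it stays there
      subst hac
      have hvb : (v * swap a b) b = v a := by simp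
      obtain ⟨hend, hlab⟩ := h.pathEnd_apply_eq_and_lt_of_min hS' (hvb ▸ hmin')
        fun q hq hqb => by have := (h.mem hq).1; rw [hqb] at this; simp at hbk; omega
      exact ⟨[], b, l, [], pathLabels (v * swap a b) l, rfl, by simpa [hvb] using hend, rfl, rfl,
        by simp, hvb ▸ hlab⟩
    · have hbc : b ≠ c := by rintro rfl; exact (hmin a hp.1).not_gt hlt
      have hvc : (v * swap a b) c = v c := by
        rw [mul_apply, swap_apply_of_ne_of_ne (Ne.symm hac) (Ne.symm hbc)]
      obtain ⟨lA, b', lB, X, Y, rfl, hb', hlab, hlen, hX, hY⟩ :=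
        ih h hS' (hvc ▸ hmin') (by simpa [hvc] using hmove)
      refine ⟨(a, b) :: lA, b', lB, v a :: X, Y, rfl, by simpa [hvc] using hb',
        by simp [hlab, hvc], by simp [hlen], ?_, hvc ▸ hY⟩
      simp only [List.mem_cons, forall_eq_or_imp]
      exact ⟨(hmin a hp.1).lt_of_ne (v.injective.ne (Ne.symm hac)), hvc ▸ hX⟩

end Minimum

lemma IsKPath.eq_cons_or_eq_append_of_min {w η : Perm (Fin n)} {l : List (Fin n × Fin n)}
    {a b : Fin n} (h : IsKPath k w l) (hend : pathEnd w l = w * η) (hU : Unimodal (pathLabels w l))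
    (hmin : ∀ d ∈ η.support, w a ≤ w d) (ha : η a ≠ a) (hba : η b = a) :
    (∃ l₁, l = (a, b) :: l₁) ∨ ∃ l₁, l = l₁ ++ [(a, b)] := by
  have hmove : pathEnd w l a ≠ w a := by rw [hend, mul_apply]; exact w.injective.ne ha
  obtain ⟨lA, b', lB, X, Y, rfl, hb', hlab, hlen, hX, hY⟩ :=
    h.exists_split_of_min (h.forall_mem_of_support_subset hend subset_rfl) hmin hmove
  obtain rfl : b' = b := η.injective (w.injective (by rw [← mul_apply, ← hend, hb', hba]))
  have hlenY : Y.length = lB.length := by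
    have := length_pathLabels w (lA ++ (a, b') :: lB)
    rw [hlab] at this
    simp only [List.length_append, List.length_cons] at this
    omega
  rw [hlab] at hU
  rcases hU.eq_nil_or_eq_nil_of_lt hX hY with rfl | rfl
  · exact .inl ⟨lB, by simp [List.length_eq_zero_iff.1 hlen.symm]⟩
  · exact .inr ⟨lA, by simp [List.length_eq_zero_iff.1 hlenY.symm]⟩

section CycleReduction

variable {α : Type*} {η : Perm α} {a b : α}

lemma Equiv.Perm.apply_ne_self_of_apply_eq (hba : η b = a) (hab : η a ≠ b) : η a ≠ a :=
  fun hfix => hab (hfix.trans (η.injective (hfix.trans hba.symm)))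

variable [DecidableEq α]

lemma Equiv.Perm.support_swap_mul_of_apply_eq [Fintype α] (hba : η b = a) (hab : η a ≠ b) :
    (swap a b * η).support = η.support.erase b := by
  have := support_swap_mul_eq η b (by rwa [hba])
  rwa [hba, swap_comm, Finset.sdiff_singleton_eq_erase] at this

lemma Equiv.Perm.support_mul_swap_of_apply_eq [Fintype α] (hba : η b = a) (hab : η a ≠ b) :
    (η * swap a b).support = η.support.erase a := by
  have hb : η⁻¹ a = b := Perm.inv_eq_iff_eq.2 hba.symm
  have := support_swap_mul_eq η⁻¹ a (by rw [hb, Ne, Perm.inv_eq_iff_eq]; exact Ne.symm hab)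
  rwa [hb, support_inv, Finset.sdiff_singleton_eq_erase, ← support_inv, mul_inv_rev, swap_inv,
    inv_inv] at this

lemma Equiv.Perm.IsCycle.swap_mul_of_apply_eq (hη : η.IsCycle) (hba : η b = a)
    (hab : η a ≠ b) : (swap a b * η).IsCycle := by
  have hne : η b ≠ b := by rintro hbb; exact hab (by rw [← hba, hbb, hbb])
  have := hη.swap_mul hne (by rwa [hba])
  rwa [hba, swap_comm] at this

lemma Equiv.Perm.IsCycle.mul_swap_of_apply_eq (hη : η.IsCycle) (hba : η b = a)
    (hab : η a ≠ b) : (η * swap a b).IsCycle := by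
  have hb : η⁻¹ a = b := Perm.inv_eq_iff_eq.2 hba.symm
  have hne : η⁻¹ a ≠ a := by rw [hb]; rintro rfl; exact hab hba
  have := (hη.inv.swap_mul hne (by rw [hb, Ne, Perm.inv_eq_iff_eq]; exact Ne.symm hab)).inv
  rwa [hb, mul_inv_rev, swap_inv, inv_inv] at this

end CycleReduction

section Admissible

variable {w η : Perm (Fin n)} {a b : Fin n}

lemma KAdmissible.swap_mul (h : KAdmissible k w η) (hba : η b = a) (ha : a.val < k)
    (hlt : w b < w (η a)) : KAdmissible k (w * swap a b) (swap a b * η) := by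
  intro c hc
  have hw : (w * swap a b) ((swap a b * η) c) = w (η c) := by simp [mul_apply]
  have hcb : c ≠ b := by rintro rfl; simp [mul_apply, hba] at hc
  rw [hw]
  rcases eq_or_ne c a with rfl | hca
  · simpa using ⟨fun _ => hlt, fun hk => by omega⟩
  · have hc' : η c ≠ c := fun hfix =>
      hc (by simp [mul_apply, hfix, swap_apply_of_ne_of_ne hca hcb])
    simpa [mul_apply, swap_apply_of_ne_of_ne hca hcb] using h c hc'

lemma KAdmissible.mul_swap (h : KAdmissible k w η) (hba : η b = a) (hb : k ≤ b.val)
    (hlt : w (η a) < w b) : KAdmissible k w (η * swap a b) := by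
  intro c hc
  have hca : c ≠ a := by rintro rfl; simp [mul_apply, hba] at hc
  rcases eq_or_ne c b with rfl | hcb
  · simpa [mul_apply] using ⟨fun hk => by omega, fun _ => hlt⟩
  · rw [mul_apply, swap_apply_of_ne_of_ne hca hcb] at hc ⊢
    exact h c hc

end Admissible

def IsUnimodalPath (k : ℕ) (u v : Perm (Fin n)) (l : List (Fin n × Fin n)) : Prop :=
  IsKPath k u l ∧ pathEnd u l = v ∧ Unimodal (pathLabels u l)

def HasUniqueUnimodalPath (k : ℕ) (w η : Perm (Fin n)) : Prop :=
  ∃ l, (∀ l', IsUnimodalPath k w (w * η) l' ↔ l' = l) ∧ l.length + 1 = η.support.card ∧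
    ∃ L1 L2, UnimodalWith (pathLabels w l) L1 L2 ∧
      L2.length + 1 = (η.support.filter fun i => i.val < k).card

section UnimodalPath

variable {u v w η : Perm (Fin n)} {l : List (Fin n × Fin n)} {a b : Fin n}

lemma IsUnimodalPath.of_cons (h : IsUnimodalPath k u v ((a, b) :: l)) (hl : l ≠ []) :
    IsUnimodalPath k (u * swap a b) v l :=
  ⟨h.1.2.2.2, h.2.1, h.2.2.of_cons (by simpa using hl)⟩

lemma IsUnimodalPath.of_append_singleton (h : IsUnimodalPath k u v (l ++ [(a, b)]))
    (hl : l ≠ []) : IsUnimodalPath k u (v * swap a b) l := by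
  obtain ⟨hP, hE, hU⟩ := h
  have hlab : pathLabels u (l ++ [(a, b)]) = pathLabels u l ++ [pathEnd u l a] := by
    simp [pathLabels_append]
  exact ⟨(isKPath_append.1 hP).1, by simp [← hE, pathEnd_append],
    (hlab ▸ hU).of_append_singleton (by simpa using hl)⟩

lemma IsUnimodalPath.eq_cons_of_lt (h : IsUnimodalPath k w (w * η) l)
    (hmin : ∀ d ∈ η.support, w a ≤ w d) (hb : k ≤ b.val) (hba : η b = a)
    (hab : η a ≠ b) (hlt : w b < w (η a)) :
    ∃ l₁, l = (a, b) :: l₁ ∧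
      IsUnimodalPath k (w * swap a b) (w * swap a b * (swap a b * η)) l₁ := by
  obtain ⟨hP, hE, hU⟩ := h
  rcases hP.eq_cons_or_eq_append_of_min hE hU hmin (apply_ne_self_of_apply_eq hba hab) hba with
    ⟨l₁, rfl⟩ | ⟨l₁, rfl⟩
  · refine ⟨l₁, rfl, ?_⟩
    rw [mul_assoc, swap_mul_self_mul]
    refine IsUnimodalPath.of_cons ⟨hP, hE, hU⟩ ?_
    rintro rfl
    simp only [pathEnd_cons, pathEnd_nil, mul_right_inj] at hE
    exact hab (hE ▸ swap_apply_left a b)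
  · have hE₁ : pathEnd w l₁ = w * (η * swap a b) := by
      simpa [pathEnd_append, mul_assoc] using congrArg (· * swap a b) hE
    have hcond := ((isKPath_append.1 hP).1.kAdmissible hE₁ b
      (by simpa [mul_apply, hba] using hab)).2 hb
    simp only [mul_apply, swap_apply_right] at hcond
    exact absurd hcond hlt.not_gt

lemma IsUnimodalPath.eq_append_of_lt (h : IsUnimodalPath k w (w * η) l)
    (hmin : ∀ d ∈ η.support, w a ≤ w d) (ha : a.val < k) (hba : η b = a) (hab : η a ≠ b)
    (hlt : w (η a) < w b) :
    ∃ l₁, l = l₁ ++ [(a, b)] ∧ IsUnimodalPath k w (w * η * swap a b) l₁ := by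
  obtain ⟨hP, hE, hU⟩ := h
  have haη := apply_ne_self_of_apply_eq hba hab
  rcases hP.eq_cons_or_eq_append_of_min hE hU hmin haη hba with ⟨l₁, rfl⟩ | ⟨l₁, rfl⟩
  · have hE₁ : pathEnd (w * swap a b) l₁ = w * swap a b * (swap a b * η) := by
      simpa [mul_assoc] using hE
    have hcond := (hP.2.2.2.kAdmissible hE₁ a
      (by simpa [mul_apply, swap_apply_of_ne_of_ne haη hab] using haη)).1 ha
    simp only [mul_apply, swap_apply_left, swap_apply_of_ne_of_ne haη hab] at hcond
    exact absurd hcond hlt.not_gt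
  · refine ⟨l₁, rfl, IsUnimodalPath.of_append_singleton ⟨hP, hE, hU⟩ ?_⟩
    rintro rfl
    simp only [List.nil_append, pathEnd_cons, pathEnd_nil, mul_right_inj] at hE
    exact hab (hE ▸ swap_apply_left a b)

lemma HasUniqueUnimodalPath.of_swap_mul (hmin : ∀ d ∈ η.support, w a ≤ w d) (ha : a.val < k)
    (hb : k ≤ b.val) (hba : η b = a) (hab : η a ≠ b) (hlt : w b < w (η a))
    (ih : HasUniqueUnimodalPath k (w * swap a b) (swap a b * η)) :
    HasUniqueUnimodalPath k w η := by
  obtain ⟨l₁, huniq, hlen, L1, L2, hL, hde⟩ := ih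
  obtain ⟨hP, hE, -⟩ := (huniq l₁).2 rfl
  have haS : a ∈ η.support := mem_support.2 (apply_ne_self_of_apply_eq hba hab)
  have hbS : b ∈ η.support := mem_support.2 (by rw [hba]; rintro rfl; omega)
  have hsupp := support_swap_mul_of_apply_eq hba hab
  have hwab : w a < w b := (hmin b hbS).lt_of_ne (w.injective.ne (by rintro rfl; omega))
  -- after the first step the minimal value sits at `b ≥ k`, where no later step can touch it
  have hgt : ∀ x ∈ pathLabels (w * swap a b) l₁, w a < x := by
    have hS := hP.forall_mem_of_support_subset hE (hsupp ▸ Finset.erase_subset b η.support)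
    simpa using (hP.pathEnd_apply_eq_and_lt_of_min hS (c := b)
      (by simpa using min_le_mul_swap_apply hmin haS hbS)
      fun q hq hqb => by have := (hP.mem hq).1; rw [hqb] at this; omega).2
  refine ⟨(a, b) :: l₁, fun l' => ⟨fun hl' => ?_, ?_⟩, ?_,
    w a :: L1, L2, hL.cons_of_lt hgt, ?_⟩
  · obtain ⟨l₁', rfl, hl₁'⟩ := hl'.eq_cons_of_lt hmin hb hba hab hlt
    rw [(huniq l₁').1 hl₁']
  · rintro rfl
    exact ⟨⟨ha, hb, hwab, hP⟩, by simp [hE, mul_assoc], _, _, hL.cons_of_lt hgt⟩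
  · rw [List.length_cons, hlen, hsupp, Finset.card_erase_add_one hbS]
  · rw [hde, hsupp, Finset.filter_erase, Finset.erase_eq_of_notMem (by simp; omega)]

lemma HasUniqueUnimodalPath.of_mul_swap (hmin : ∀ d ∈ η.support, w a ≤ w d) (ha : a.val < k)
    (hb : k ≤ b.val) (hba : η b = a) (hab : η a ≠ b) (hlt : w (η a) < w b)
    (ih : HasUniqueUnimodalPath k w (η * swap a b)) :
    HasUniqueUnimodalPath k w η := by
  obtain ⟨l₁, huniq, hlen, L1, L2, hL, hde⟩ := ih
  obtain ⟨hP, hE, -⟩ := (huniq l₁).2 rfl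
  have haη := apply_ne_self_of_apply_eq hba hab
  have haS : a ∈ η.support := mem_support.2 haη
  have hsupp := support_mul_swap_of_apply_eq hba hab
  have hgt : ∀ x ∈ pathLabels w l₁, w a < x := by
    have hS := hP.forall_mem_of_support_subset hE (hsupp ▸ Finset.erase_subset a η.support)
    refine (hP.pathEnd_apply_eq_and_lt_of_min hS hmin fun q hq => ?_).2
    exact Finset.ne_of_mem_erase (hsupp ▸ (hP.forall_mem_of_support_subset hE subset_rfl q hq).1)
  have hend : pathEnd w l₁ a = w a := by rw [hE, mul_apply, mul_apply, swap_apply_left, hba]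
  have hlab : pathLabels w (l₁ ++ [(a, b)]) = pathLabels w l₁ ++ [w a] := by
    simp [pathLabels_append, hend]
  refine ⟨l₁ ++ [(a, b)], fun l' => ⟨fun hl' => ?_, ?_⟩, ?_,
    L1, L2 ++ [w a], hlab ▸ hL.append_singleton_of_lt hgt, ?_⟩
  · obtain ⟨l₁', rfl, hl₁'⟩ := hl'.eq_append_of_lt hmin ha hba hab hlt
    rw [(huniq l₁').1 (by rwa [mul_assoc] at hl₁')]
  · rintro rfl
    refine ⟨isKPath_append.2 ⟨hP, isKPath_singleton.2 ⟨ha, hb, ?_⟩⟩,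
      by simp [pathEnd_append, hE, mul_assoc], _, _, hlab ▸ hL.append_singleton_of_lt hgt⟩
    rw [hend, hE, mul_apply, mul_apply, swap_apply_right]
    exact (hmin _ (apply_mem_support.2 haS)).lt_of_ne (w.injective.ne haη.symm)
  · rw [List.length_append, List.length_singleton, hlen, hsupp, Finset.card_erase_add_one haS]
  · rw [List.length_append, List.length_singleton, hde, hsupp, Finset.filter_erase,
      Finset.card_erase_add_one (by simp [ha, haη])]

lemma hasUniqueUnimodalPath_swap (ha : a.val < k) (hb : k ≤ b.val) (hab : w a < w b) :
    HasUniqueUnimodalPath k w (swap a b) := by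
  have hne : a ≠ b := by rintro rfl; omega
  have hsupp : (swap a b).support = {a, b} := support_swap hne
  have hmin : ∀ d ∈ (swap a b).support, w a ≤ w d := by
    simpa [hsupp] using hab.le
  refine ⟨[(a, b)], fun l' => ⟨fun ⟨hP, hE, hU⟩ => ?_, ?_⟩,
    by simp [card_support_swap hne],
    [w a], [], ⟨by simp, by simp, List.IsChain.singleton _,
      fun _ _ => List.IsChain.singleton _⟩, ?_⟩
  · rcases hP.eq_cons_or_eq_append_of_min hE hU hmin (by simpa using hne.symm)
      (swap_apply_right a b) with ⟨l₁, rfl⟩ | ⟨l₁, rfl⟩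
    · rw [hP.2.2.2.eq_nil_of_pathEnd_eq_self (by simpa [mul_assoc] using hE)]
    · rw [(isKPath_append.1 hP).1.eq_nil_of_pathEnd_eq_self
        (by simpa [pathEnd_append] using congrArg (· * swap a b) hE), List.nil_append]
  · rintro rfl
    exact ⟨isKPath_singleton.2 ⟨ha, hb, hab⟩, by simp, [w a], [], by simp, by simp,
      List.IsChain.singleton _, fun _ _ => List.IsChain.singleton _⟩
  · rw [hsupp, Finset.filter_insert, Finset.filter_singleton]
    simp [ha, hb.not_gt]

end UnimodalPath

theorem KAdmissible.hasUniqueUnimodalPath {w η : Perm (Fin n)} (hη : η.IsCycle)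
    (h : KAdmissible k w η) : HasUniqueUnimodalPath k w η := by
  induction hN : η.support.card using Nat.strong_induction_on generalizing w η with
  | _ N ih =>
  obtain ⟨a, haS, hmin⟩ := η.support.exists_min_image w hη.nonempty_support
  obtain ⟨b, hba⟩ := η.surjective a
  have haη : η a ≠ a := mem_support.1 haS
  have hbS : b ∈ η.support := mem_support.2 fun hbb => haη (by rw [← hba, hbb, hbb])
  have ha : a.val < k := by
    by_contra! hk
    exact ((h a haη).2 hk).not_ge (hmin _ (apply_mem_support.2 haS))
  have hb : k ≤ b.val := by
    by_contra! hk
    have := (h b (mem_support.1 hbS)).1 hk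
    rw [hba] at this
    exact this.not_ge (hmin b hbS)
  by_cases hab : η a = b
  · obtain rfl : η = swap a b := by
      rw [hη.eq_swap_of_apply_apply_eq_self haη (by rw [hab, hba]), hab]
    exact hasUniqueUnimodalPath_swap ha hb ((hmin b hbS).lt_of_ne (w.injective.ne (by omega)))
  rcases lt_or_gt_of_ne (w.injective.ne (Ne.symm hab)) with hlt | hlt
  · refine .of_swap_mul hmin ha hb hba hab hlt (ih _ ?_ (hη.swap_mul_of_apply_eq hba hab)
      (h.swap_mul hba ha hlt) rfl)
    rw [← hN, support_swap_mul_of_apply_eq hba hab]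
    exact Finset.card_erase_lt_of_mem hbS
  · refine .of_mul_swap hmin ha hb hba hab hlt (ih _ ?_ (hη.mul_swap_of_apply_eq hba hab)
      (h.mul_swap hba hb hlt) rfl)
    rw [← hN, support_mul_swap_of_apply_eq hba hab]
    exact Finset.card_erase_lt_of_mem haS

end

theorem stmt12_general (n k m : ℕ) (u η : Equiv.Perm (Fin n))
    (hcyc : η.IsCycle) (hcard : η.support.card = m + 1)
    (hle : extKBruhat k u (u * η)) :
    (∃! l : List (Fin n × Fin n),
        IsKPath k u l ∧ pathEnd u l = u * η ∧ Unimodal (pathLabels u l)) ∧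
      ∀ l : List (Fin n × Fin n),
        IsKPath k u l → pathEnd u l = u * η → Unimodal (pathLabels u l) →
          l.length = m ∧
            ∀ L1 L2, UnimodalWith (pathLabels u l) L1 L2 →
              L2.length =
                (Finset.univ.filter fun i : Fin n => i.val < k ∧ η i ≠ i).card - 1 := by
  obtain ⟨l₀, hP₀, hE₀⟩ := hle.exists_isKPath
  obtain ⟨l, huniq, hlen, L1, L2, hL, hde⟩ :=
    (hP₀.kAdmissible hE₀).hasUniqueUnimodalPath hcyc
  have hht : (Finset.univ.filter fun i : Fin n => i.val < k ∧ η i ≠ i) =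
      η.support.filter fun i => i.val < k := by
    ext
    simp [and_comm]
  refine ⟨⟨l, (huniq l).2 rfl, fun l' hl' => (huniq l').1 hl'⟩, fun l' hP hE hU => ?_⟩
  obtain rfl := (huniq l').1 ⟨hP, hE, hU⟩
  refine ⟨by omega, fun M1 M2 hM => ?_⟩
  rw [hht, hM.length_eq hL]
  omega

/-- If `η` is an `(m+1)`-cycle with `m ≥ 1` and `u ≤_k u·η` in the extended
`k`-Bruhat order, then there is a unique unimodal path from `u` to `u·η`;
it has length `m` and its number of decreasing steps equals
`ht_k(η) = #{i ≤ k : η(i) ≠ i} − 1`. -/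
theorem stmt12 (n k m : ℕ) (hm : 1 ≤ m) (u η : Equiv.Perm (Fin n))
    (hcyc : η.IsCycle) (hcard : η.support.card = m + 1)
    (hle : extKBruhat k u (u * η)) :
    (∃! l : List (Fin n × Fin n),
        IsKPath k u l ∧ pathEnd u l = u * η ∧ Unimodal (pathLabels u l)) ∧
      ∀ l : List (Fin n × Fin n),
        IsKPath k u l → pathEnd u l = u * η → Unimodal (pathLabels u l) →
          l.length = m ∧
            ∀ L1 L2, UnimodalWith (pathLabels u l) L1 L2 →
              L2.length =
                (Finset.univ.filter fun i : Fin n => i.val < k ∧ η i ≠ i).card - 1 :=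
  stmt12_general n k m u η hcyc hcard hle
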